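/- Let G be a graph on vertex set {1,...,n} with maximum degree Δ. Then every QTF f : {-1,1}^n → {-1,1} supported on G satisfies I[f] ≤ √(Δ + 1) · √n. -/

import Mathlib

open Finset
open scoped Classical

noncomputable section

/-- The Boolean cube `{-1,1}^V` as a finset of functions `V → ℤ`. -/
def cube (V : Type*) [Fintype V] [DecidableEq V] : Finset (V → ℤ) :=
  Fintype.piFinset fun _ => ({-1, 1} : Finset ℤ)

/-- Negate the `i`-th coordinate. -/
def flipAt {V : Type*} [DecidableEq V] (x : V → ℤ) (i : V) : V → ℤ :=
  Function.update x i (-(x i))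

/-- Influence of coordinate `i` on `f`: the probability over a uniform point of the cube
that flipping coordinate `i` changes the value of `f`. -/
def coordInf {V : Type*} [Fintype V] [DecidableEq V] {α : Type*} (f : (V → ℤ) → α) (i : V) : ℝ :=
  (∑ x ∈ cube V, if f x ≠ f (flipAt x i) then (1 : ℝ) else 0) / (cube V).card

/-- Total influence of `f`. -/
def totalInf {V : Type*} [Fintype V] [DecidableEq V] {α : Type*} (f : (V → ℤ) → α) : ℝ :=
  ∑ i : V, coordInf f i

/-- Sign function, with `sgn 0 = 0`. -/
def sgn (t : ℝ) : ℤ := if 0 < t then 1 else if t < 0 then -1 else 0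

/-- A quadratic multilinear polynomial `∑_{i<j} a_{ij} x_i x_j + ∑_i b_i x_i + c`. -/
def quadPoly {V : Type*} [Fintype V] [LinearOrder V] (a : V → V → ℝ) (b : V → ℝ) (c : ℝ)
    (x : V → ℤ) : ℝ :=
  (∑ i : V, ∑ j : V, if i < j then a i j * x i * x j else 0) + (∑ i : V, b i * x i) + c

/-- `f` is a QTF supported on the graph `G`: it has a quadratic representation whose
cross terms only involve edges of `G`, and whose polynomial is nonvanishing on the cube. -/
def IsQTFSupportedOn {V : Type*} [Fintype V] [LinearOrder V] (G : SimpleGraph V)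
    (f : (V → ℤ) → ℤ) : Prop :=
  ∃ a b c, (∀ i j : V, i < j → a i j ≠ 0 → G.Adj i j) ∧
    (∀ x ∈ cube V, quadPoly a b c x ≠ 0) ∧
    (∀ x ∈ cube V, f x = sgn (quadPoly a b c x))

/-!
For any `p` on the cube, `p x - p (x^{⊕i}) = 2 xᵢ ∂ᵢp(x)` with `∂ᵢp` independent of `xᵢ`. So if
`p` does not vanish, flipping `xᵢ` changes `sgn p` only when `|∂ᵢp|` dominates, and then
`sgn p = xᵢ sgn ∂ᵢp`; pairing `x` with `x^{⊕i}` gives `Inf_i[f] = E[f xᵢ sgn ∂ᵢp]`. Hence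
`I[f] = E[f T]` with `T = ∑ᵢ xᵢ sgn ∂ᵢp`, and `I[f]² ≤ E[T²]` by Cauchy–Schwarz. For a QTF
supported on `G`, `∂ⱼp = bⱼ + ∑ₖ Aⱼₖ xₖ` (with `A` the symmetrized `a`) does not depend on `xᵢ`
unless `ij` is an edge, so for non-adjacent `i ≠ j` the term `E[xᵢ xⱼ sgn ∂ᵢp sgn ∂ⱼp]` is odd
in `xᵢ` and vanishes. The remaining `n (Δ + 1)` terms are at most `1`, so `E[T²] ≤ n (Δ + 1)`.
-/

section Cube

variable {V : Type*} [DecidableEq V]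

@[simp]
lemma flipAt_apply_self (x : V → ℤ) (i : V) : flipAt x i i = -x i := by
  simp [flipAt]

lemma flipAt_apply_of_ne (x : V → ℤ) {i j : V} (h : j ≠ i) : flipAt x i j = x j := by
  simp [flipAt, h]

@[simp]
lemma flipAt_flipAt (x : V → ℤ) (i : V) : flipAt (flipAt x i) i = x := by
  simp [flipAt]

lemma cast_flipAt (x : V → ℤ) (i : V) :
    (fun j => (flipAt x i j : ℝ)) = (fun j => (x j : ℝ)) + Pi.single i (-2 * (x i : ℝ)) := by
  funext j
  rcases eq_or_ne j i with rfl | h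
  · simp only [Pi.add_apply, flipAt_apply_self, Pi.single_eq_same]
    push_cast
    ring
  · simp [flipAt_apply_of_ne x h, h]

variable [Fintype V]

lemma mem_cube {x : V → ℤ} : x ∈ cube V ↔ ∀ i, x i = -1 ∨ x i = 1 := by
  simp [cube, Fintype.mem_piFinset]

lemma card_cube_pos : 0 < #(cube V) :=
  card_pos.2 ⟨fun _ => 1, mem_cube.2 fun _ => Or.inr rfl⟩

lemma flipAt_mem_cube {x : V → ℤ} (hx : x ∈ cube V) (i : V) : flipAt x i ∈ cube V := by
  rw [mem_cube] at hx ⊢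
  intro j
  rcases eq_or_ne j i with rfl | h
  · rw [flipAt_apply_self]
    rcases hx j with h | h <;> simp [h]
  · rw [flipAt_apply_of_ne x h]
    exact hx j

lemma sum_cube_flipAt {M : Type*} [AddCommMonoid M] (g : (V → ℤ) → M) (i : V) :
    ∑ x ∈ cube V, g (flipAt x i) = ∑ x ∈ cube V, g x :=
  sum_nbij' (flipAt · i) (flipAt · i) (fun _ hx => flipAt_mem_cube hx i)
    (fun _ hx => flipAt_mem_cube hx i) (fun x _ => flipAt_flipAt x i)
    (fun x _ => flipAt_flipAt x i) fun _ _ => rfl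

lemma sum_cube_eq_zero_of_flipAt {g : (V → ℤ) → ℝ} {i : V}
    (hg : ∀ x ∈ cube V, g (flipAt x i) = -g x) : ∑ x ∈ cube V, g x = 0 := by
  have h := sum_cube_flipAt g i
  rw [sum_congr rfl hg, sum_neg_distrib] at h
  linarith

lemma sum_cube_coord_mul_eq_zero {g : (V → ℤ) → ℝ} {i : V}
    (hg : ∀ x ∈ cube V, g (flipAt x i) = g x) : ∑ x ∈ cube V, (x i : ℝ) * g x = 0 :=
  sum_cube_eq_zero_of_flipAt fun x hx => by rw [hg x hx, flipAt_apply_self]; push_cast; ring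

end Cube

section Sign

lemma sgn_of_pos {t : ℝ} (h : 0 < t) : sgn t = 1 := by simp [sgn, h]

lemma sgn_of_neg {t : ℝ} (h : t < 0) : sgn t = -1 := by simp [sgn, h, h.not_gt]

lemma abs_sgn_le_one (t : ℝ) : |(sgn t : ℝ)| ≤ 1 := by
  unfold sgn; split_ifs <;> norm_num

lemma sgn_two_mul_mul {ε : ℤ} (hε : ε = -1 ∨ ε = 1) (t : ℝ) : sgn (2 * ε * t) = ε * sgn t := by
  rcases hε with rfl | rfl <;> unfold sgn <;> push_cast <;> split_ifs <;> first | rfl | linarith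

lemma ite_sgn_ne_eq {p q : ℝ} (hp : p ≠ 0) (hq : q ≠ 0) :
    (if sgn p ≠ sgn q then 2 else 0 : ℤ) = sgn (p - q) * (sgn p - sgn q) := by
  rcases hp.lt_or_gt with hp | hp <;> rcases hq.lt_or_gt with hq | hq
  · simp [sgn_of_neg hp, sgn_of_neg hq]
  · simp [sgn_of_neg hp, sgn_of_pos hq, sgn_of_neg (by linarith : p - q < 0)]
  · simp [sgn_of_pos hp, sgn_of_neg hq, sgn_of_pos (by linarith : 0 < p - q)]
  · simp [sgn_of_pos hp, sgn_of_pos hq]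

end Sign

open Matrix in
theorem Matrix.dotProduct_mulVec_add_single {V R : Type*} [Fintype V] [DecidableEq V] [CommRing R]
    {U : Matrix V V R} {i : V} (hU : U i i = 0) (X : V → R) (δ : R) :
    (X + Pi.single i δ) ⬝ᵥ (U *ᵥ (X + Pi.single i δ)) = X ⬝ᵥ (U *ᵥ X) + δ * ((U + Uᵀ) *ᵥ X) i := by
  rw [mulVec_add, dotProduct_add, add_dotProduct, add_dotProduct, single_dotProduct,
    single_dotProduct, dotProduct_mulVec X U (Pi.single i δ), dotProduct_single, add_mulVec,
    mulVec_transpose]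
  simp [hU]
  ring

section Influence

variable {V : Type*} [Fintype V] [DecidableEq V]

theorem coordInf_eq_sum_mul_sgn {f : (V → ℤ) → ℤ} {p d : (V → ℤ) → ℝ} {i : V}
    (hp : ∀ x ∈ cube V, p x ≠ 0) (hf : ∀ x ∈ cube V, f x = sgn (p x))
    (hflip : ∀ x ∈ cube V, p x - p (flipAt x i) = 2 * x i * d x)
    (hd : ∀ x ∈ cube V, d (flipAt x i) = d x) :
    coordInf f i = (∑ x ∈ cube V, (f x * x i * sgn (d x) : ℝ)) / #(cube V) := by
  unfold coordInf
  congr 1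
  rw [← sub_eq_zero, ← sum_sub_distrib]
  refine sum_cube_eq_zero_of_flipAt (i := i) fun x hx => ?_
  have hx' := flipAt_mem_cube hx i
  have key : (if f x ≠ f (flipAt x i) then 2 else 0 : ℤ) =
      x i * sgn (d x) * (f x - f (flipAt x i)) := by
    rw [hf x hx, hf _ hx', ite_sgn_ne_eq (hp x hx) (hp _ hx'), hflip x hx,
      sgn_two_mul_mul (mem_cube.1 hx i)]
  rw [flipAt_flipAt, flipAt_apply_self, hd x hx]
  by_cases h : f x = f (flipAt x i)
  · simp only [h, ne_eq, not_true_eq_false, if_false]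
    push_cast
    ring
  · rw [if_pos h] at key
    have key' : (2 : ℝ) = x i * sgn (d x) * (f x - f (flipAt x i)) := by exact_mod_cast key
    simp only [h, Ne.symm h, ne_eq, not_false_eq_true, if_true]
    push_cast
    linarith

end Influence

section SecondMoment

variable {V : Type*} [Fintype V] [DecidableEq V] (G : SimpleGraph V) [DecidableRel G.Adj]

lemma sum_le_degree_add_one_mul {c : V → ℝ} {B : ℝ} (i : V) (hc : ∀ j, c j ≤ B) (hB : 0 ≤ B)
    (hzero : ∀ j, j ≠ i → ¬G.Adj i j → c j = 0) :
    ∑ j, c j ≤ (G.degree i + 1) * B := by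
  calc ∑ j, c j = ∑ j ∈ insert i (G.neighborFinset i), c j :=
        (sum_subset (subset_univ _) fun j _ hj => by
          rw [mem_insert, SimpleGraph.mem_neighborFinset, not_or] at hj
          exact hzero j hj.1 hj.2).symm
    _ ≤ #(insert i (G.neighborFinset i)) • B := sum_le_card_nsmul _ _ _ fun j _ => hc j
    _ ≤ (G.degree i + 1) * B := by
        rw [nsmul_eq_mul, ← G.card_neighborFinset_eq_degree]
        gcongr
        exact_mod_cast card_insert_le _ _

lemma abs_coord_eq_one {x : V → ℤ} (hx : x ∈ cube V) (i : V) : |(x i : ℝ)| = 1 := by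
  rcases mem_cube.1 hx i with h | h <;> simp [h]

theorem sum_cube_sq_sum_coord_mul_le {s : V → (V → ℤ) → ℝ} (hs : ∀ i x, |s i x| ≤ 1)
    (hinv : ∀ i j, ¬G.Adj i j → ∀ x ∈ cube V, s j (flipAt x i) = s j x) :
    ∑ x ∈ cube V, (∑ i, x i * s i x) ^ 2 ≤ (G.maxDegree + 1) * Fintype.card V * #(cube V) := by
  set N : ℝ := (#(cube V) : ℝ)
  have hterm : ∀ i j, ∑ x ∈ cube V, x i * s i x * (x j * s j x) ≤ N := by
    intro i j
    refine (sum_le_card_nsmul _ _ 1 fun x hx => ?_).trans (by simp [N])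
    have hi : |(x i : ℝ) * s i x| ≤ 1 := by rw [abs_mul, abs_coord_eq_one hx, one_mul]; exact hs i x
    have hj : |(x j : ℝ) * s j x| ≤ 1 := by rw [abs_mul, abs_coord_eq_one hx, one_mul]; exact hs j x
    exact (le_abs_self _).trans (by rw [abs_mul]; exact mul_le_one₀ hi (abs_nonneg _) hj)
  have hortho : ∀ i j, j ≠ i → ¬G.Adj i j → ∑ x ∈ cube V, x i * s i x * (x j * s j x) = 0 := by
    intro i j hji hij
    simp_rw [mul_assoc]
    refine sum_cube_coord_mul_eq_zero fun x hx => ?_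
    rw [hinv i i G.irrefl x hx, hinv i j hij x hx, flipAt_apply_of_ne x hji]
  calc ∑ x ∈ cube V, (∑ i, x i * s i x) ^ 2
      = ∑ i, ∑ j, ∑ x ∈ cube V, x i * s i x * (x j * s j x) := by
        simp_rw [sq, sum_mul_sum]
        rw [sum_comm]
        exact sum_congr rfl fun i _ => sum_comm
    _ ≤ ∑ i, (G.degree i + 1) * N := sum_le_sum fun i _ =>
        sum_le_degree_add_one_mul G i (hterm i) (Nat.cast_nonneg _) (hortho i)
    _ ≤ ∑ _i : V, (G.maxDegree + 1) * N := by
        gcongr with i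
        exact_mod_cast G.degree_le_maxDegree i
    _ = (G.maxDegree + 1) * Fintype.card V * N := by
        rw [sum_const, card_univ, nsmul_eq_mul]
        ring

end SecondMoment

section Quadratic

open Matrix

variable {V : Type*} [LinearOrder V]

def strictUpper (a : V → V → ℝ) : Matrix V V ℝ := of fun i j => if i < j then a i j else 0

lemma strictUpper_add_transpose_apply_eq_zero {G : SimpleGraph V} {a : V → V → ℝ}
    (hadj : ∀ i j, i < j → a i j ≠ 0 → G.Adj i j) {i j : V} (h : ¬G.Adj i j) :
    (strictUpper a + (strictUpper a)ᵀ) j i = 0 := by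
  simp only [Matrix.add_apply, transpose_apply, strictUpper, of_apply]
  rcases lt_trichotomy i j with hij | rfl | hji
  · simp only [hij, hij.not_gt, if_true, if_false, zero_add]
    by_contra h0
    exact h (hadj i j hij h0)
  · simp
  · simp only [hji, hji.not_gt, if_true, if_false, add_zero]
    by_contra h0
    exact h (hadj j i hji h0).symm

variable [Fintype V]

def quadPolyDeriv (a : V → V → ℝ) (b : V → ℝ) (i : V) (x : V → ℤ) : ℝ :=
  b i + ((strictUpper a + (strictUpper a)ᵀ) *ᵥ fun j => (x j : ℝ)) i

lemma quadPoly_eq_dotProduct (a : V → V → ℝ) (b : V → ℝ) (c : ℝ) (x : V → ℤ) :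
    quadPoly a b c x = (fun j => (x j : ℝ)) ⬝ᵥ (strictUpper a *ᵥ fun j => (x j : ℝ)) +
      b ⬝ᵥ (fun j => (x j : ℝ)) + c := by
  simp only [quadPoly, dotProduct, mulVec, strictUpper, of_apply, mul_sum]
  congr 2
  refine sum_congr rfl fun i _ => sum_congr rfl fun j _ => ?_
  split_ifs <;> ring

lemma quadPoly_sub_quadPoly_flipAt (a : V → V → ℝ) (b : V → ℝ) (c : ℝ) (x : V → ℤ) (i : V) :
    quadPoly a b c x - quadPoly a b c (flipAt x i) = 2 * x i * quadPolyDeriv a b i x := by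
  rw [quadPoly_eq_dotProduct, quadPoly_eq_dotProduct, cast_flipAt,
    dotProduct_mulVec_add_single (by simp [strictUpper]), dotProduct_add, dotProduct_single,
    quadPolyDeriv]
  ring

lemma quadPolyDeriv_flipAt {a : V → V → ℝ} (b : V → ℝ) {i j : V}
    (h : (strictUpper a + (strictUpper a)ᵀ) j i = 0) (x : V → ℤ) :
    quadPolyDeriv a b j (flipAt x i) = quadPolyDeriv a b j x := by
  simp [quadPolyDeriv, cast_flipAt, mulVec_add, h]

end Quadratic

theorem IsQTFSupportedOn.totalInf_le {V : Type*} [Fintype V] [LinearOrder V]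
    {G : SimpleGraph V} [DecidableRel G.Adj] {f : (V → ℤ) → ℤ} (hf : IsQTFSupportedOn G f) :
    totalInf f ≤ √((G.maxDegree : ℝ) + 1) * √(Fintype.card V) := by
  obtain ⟨a, b, c, hadj, hp, hrep⟩ := hf
  set N : ℝ := (#(cube V) : ℝ)
  set s : V → (V → ℤ) → ℝ := fun i x => sgn (quadPolyDeriv a b i x)
  have hs : ∀ i j, ¬G.Adj i j → ∀ x ∈ cube V, s j (flipAt x i) = s j x := fun i j h x _ => by
    simp only [s, quadPolyDeriv_flipAt b (strictUpper_add_transpose_apply_eq_zero hadj h)]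
  have hcorr : totalInf f = (∑ x ∈ cube V, f x * ∑ i, x i * s i x) / N := by
    simp only [totalInf, coordInf_eq_sum_mul_sgn hp hrep
      (fun x _ => quadPoly_sub_quadPoly_flipAt a b c x _)
      (fun x _ => quadPolyDeriv_flipAt b (strictUpper_add_transpose_apply_eq_zero hadj G.irrefl) x),
      ← sum_div, mul_sum]
    rw [sum_comm]
    simp only [s, N, mul_assoc]
  have hN : 0 < N := Nat.cast_pos.2 card_cube_pos
  have hcs : (∑ x ∈ cube V, f x * ∑ i, x i * s i x) ^ 2 ≤
      N * ∑ x ∈ cube V, (∑ i, x i * s i x) ^ 2 := by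
    refine (sq_sum_le_card_mul_sum_sq ..).trans
      (mul_le_mul_of_nonneg_left (sum_le_sum fun x hx => ?_) hN.le)
    rw [mul_pow, ← sq_abs (f x : ℝ), hrep x hx]
    exact mul_le_of_le_one_left (sq_nonneg _) (pow_le_one₀ (abs_nonneg _) (abs_sgn_le_one _))
  rw [← Real.sqrt_mul (by positivity), hcorr]
  refine (le_abs_self _).trans (Real.abs_le_sqrt ?_)
  rw [div_pow, div_le_iff₀ (by positivity)]
  calc _ ≤ N * ∑ x ∈ cube V, (∑ i, x i * s i x) ^ 2 := hcs
    _ ≤ N * ((G.maxDegree + 1) * Fintype.card V * N) := by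
        gcongr
        exact sum_cube_sq_sum_coord_mul_le G (fun i x => abs_sgn_le_one _) hs
    _ = _ := by ring

/-- Every QTF supported on a graph with maximum degree `Δ` satisfies
`I[f] ≤ √(Δ+1) · √n`. -/
theorem qtf_influence_maxDegree {n : ℕ} (G : SimpleGraph (Fin n)) [DecidableRel G.Adj]
    (f : (Fin n → ℤ) → ℤ) (hf : IsQTFSupportedOn G f) :
    totalInf f ≤ Real.sqrt ((G.maxDegree : ℝ) + 1) * Real.sqrt n := by
  simpa using hf.totalInf_le
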